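/- Let D be a strongly connected tournament, a a vertex, x ∈ a⁺ and y ∈ a⁻ with line(a,x) = line(y,a). Define X = {line(z,x) : z ∈ a⁻ ∩ x⁻} ∪ {line(x,z) : z ∈ a⁺ ∩ y⁻, z ≠ x}, Y = {line(y,z) : z ∈ a⁺ ∩ y⁺} ∪ {line(z,y) : z ∈ a⁻ ∩ x⁺, z ≠ y}, and Z = {line(a,z) : z ∈ a⁺} ∪ {line(z,a) : z ∈ a⁻}. Then X, Y, Z are pairwise disjoint, and line(x,y) ∉ X ∪ Y. -/
import Mathlib

open scoped Classical

/-- `stepsTo A n u v` : there is a directed walk of length `n` from `u` to `v`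
in the digraph with arc relation `A`. -/
def stepsTo {V : Type*} (A : V → V → Prop) : ℕ → V → V → Prop
  | 0, u, v => u = v
  | n+1, u, v => ∃ w, A u w ∧ stepsTo A n w v

/-- A digraph is strongly connected if every vertex is reachable from every vertex. -/
def StronglyConnected {V : Type*} (A : V → V → Prop) : Prop :=
  ∀ u v : V, ∃ n : ℕ, stepsTo A n u v

/-- The directed distance: the length of a shortest directed path from `u` to `v`. -/
noncomputable def ddist {V : Type*} (A : V → V → Prop) (u v : V) : ℕ :=
  sInf {n : ℕ | stepsTo A n u v}

/-- `btw A u v z` means `z ∈ [u,v]`, i.e. `z` lies on a shortest dipath from `u` to `v`. -/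
def btw {V : Type*} (A : V → V → Prop) (u v z : V) : Prop :=
  ddist A u v = ddist A u z + ddist A z v

/-- The line generated by the ordered pair `(u,v)`:
`{z : u ∈ [z,v] or v ∈ [u,z] or z ∈ [u,v]}`. -/
def line {V : Type*} (A : V → V → Prop) (u v : V) : Set V :=
  {z | btw A z v u ∨ btw A u z v ∨ btw A u v z}

/-- `L(D)`: the set of all lines generated by ordered pairs of distinct vertices. -/
def lineSet {V : Type*} (A : V → V → Prop) : Set (Set V) :=
  {S | ∃ u v : V, u ≠ v ∧ S = line A u v}

section Aux

variable {V : Type*} {A : V → V → Prop}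

lemma stepsTo_trans {m n : ℕ} {u v w : V} (h1 : stepsTo A m u v) (h2 : stepsTo A n v w) :
    stepsTo A (m + n) u w := by
  induction m generalizing u with
  | zero =>
      have h : u = v := h1
      subst h
      simpa using h2
  | succ k ih =>
      obtain ⟨t, hut, hs⟩ := h1
      have hrw : k + 1 + n = (k + n) + 1 := by omega
      rw [hrw]
      exact ⟨t, hut, ih hs⟩

lemma ddist_le {n : ℕ} {u v : V} (h : stepsTo A n u v) : ddist A u v ≤ n :=
  Nat.sInf_le h

lemma stepsTo_ddist (hsc : StronglyConnected A) (u v : V) :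
    stepsTo A (ddist A u v) u v :=
  Nat.sInf_mem (hsc u v)

lemma ddist_self (A : V → V → Prop) (u : V) : ddist A u u = 0 :=
  Nat.le_antisymm (ddist_le (show stepsTo A 0 u u from rfl)) (Nat.zero_le _)

lemma eq_of_ddist_zero (hsc : StronglyConnected A) {u v : V} (h : ddist A u v = 0) :
    u = v := by
  have hm := stepsTo_ddist hsc u v
  rw [h] at hm
  exact hm

lemma ddist_arc (hanti : ∀ u v : V, ¬ (A u v ∧ A v u)) {u v : V} (h : A u v) :
    ddist A u v = 1 := by
  have h1 : ddist A u v ≤ 1 := ddist_le (show stepsTo A 1 u v from ⟨v, h, rfl⟩)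
  have hmem : stepsTo A (ddist A u v) u v :=
    Nat.sInf_mem (⟨1, show stepsTo A 1 u v from ⟨v, h, rfl⟩⟩ : {n | stepsTo A n u v}.Nonempty)
  rcases Nat.le_one_iff_eq_zero_or_eq_one.mp h1 with h0 | h1'
  · exfalso
    rw [h0] at hmem
    have : u = v := hmem
    subst this
    exact hanti u u ⟨h, h⟩
  · exact h1'

lemma arc_of_ddist_one (hsc : StronglyConnected A) {u v : V} (h : ddist A u v = 1) :
    A u v := by
  have hm := stepsTo_ddist hsc u v
  rw [h] at hm
  obtain ⟨w, huw, hw⟩ := hm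
  have : w = v := hw
  subst this
  exact huw

lemma ddist_triangle (hsc : StronglyConnected A) (u v w : V) :
    ddist A u w ≤ ddist A u v + ddist A v w :=
  ddist_le (stepsTo_trans (stepsTo_ddist hsc u v) (stepsTo_ddist hsc v w))

lemma two_le_ddist (hsc : StronglyConnected A) {u v : V} (hne : u ≠ v) (hna : ¬ A u v) :
    2 ≤ ddist A u v := by
  have h0 : ddist A u v ≠ 0 := fun h => hne (eq_of_ddist_zero hsc h)
  have h1 : ddist A u v ≠ 1 := fun h => hna (arc_of_ddist_one hsc h)
  omega

lemma ddist_succ (hsc : StronglyConnected A) {u v : V} {n : ℕ}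
    (h : ddist A u v = n + 1) : ∃ w, A u w ∧ ddist A w v = n := by
  have hm := stepsTo_ddist hsc u v
  rw [h] at hm
  obtain ⟨w, huw, hs⟩ := hm
  refine ⟨w, huw, Nat.le_antisymm (ddist_le hs) ?_⟩
  have h2 : ddist A u v ≤ 1 + ddist A w v :=
    ddist_le (stepsTo_trans (show stepsTo A 1 u w from ⟨w, huw, rfl⟩) (stepsTo_ddist hsc w v))
  omega

lemma mem_line_left (A : V → V → Prop) (u v : V) : u ∈ line A u v := by
  simp only [line, Set.mem_setOf_eq, _root_.btw, ddist_self]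
  omega

lemma mem_line_right (A : V → V → Prop) (u v : V) : v ∈ line A u v := by
  simp only [line, Set.mem_setOf_eq, _root_.btw, ddist_self]
  omega

lemma mem_line_iff (hanti : ∀ u v : V, ¬ (A u v ∧ A v u)) (hsc : StronglyConnected A)
    {u v : V} (huv : A u v) (w : V) :
    w ∈ line A u v ↔ ddist A w v = ddist A w u + 1 ∨ ddist A u w = ddist A v w + 1 := by
  have h1 : ddist A u v = 1 := ddist_arc hanti huv
  simp only [line, Set.mem_setOf_eq, _root_.btw, h1]
  constructor
  · rintro (h | h | h)
    · exact Or.inl h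
    · right; omega
    · -- 1 = ddist u w + ddist w v
      rcases Nat.eq_zero_or_pos (ddist A u w) with h0 | hp
      · have : u = w := eq_of_ddist_zero hsc h0
        subst this
        left
        rw [ddist_self]
        omega
      · have h0 : ddist A w v = 0 := by omega
        have : w = v := eq_of_ddist_zero hsc h0
        subst this
        right
        rw [ddist_self]
        omega
  · rintro (h | h)
    · exact Or.inl h
    · exact Or.inr (Or.inl (by omega))

end Aux

theorem stmt11 {V : Type*} [Fintype V] (A : V → V → Prop)
    (hanti : ∀ u v : V, ¬ (A u v ∧ A v u))
    (hcomp : ∀ u v : V, u ≠ v → A u v ∨ A v u)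
    (hsc : StronglyConnected A)
    (a x y : V) (hx : A a x) (hy : A y a) (hrep : line A a x = line A y a) :
    Disjoint ({S | (∃ z : V, A z a ∧ A z x ∧ S = line A z x) ∨
               (∃ z : V, A a z ∧ A z y ∧ z ≠ x ∧ S = line A x z)} : Set (Set V))
             {S | (∃ z : V, A a z ∧ A y z ∧ S = line A y z) ∨
               (∃ z : V, A z a ∧ A x z ∧ z ≠ y ∧ S = line A z y)} ∧
    Disjoint ({S | (∃ z : V, A z a ∧ A z x ∧ S = line A z x) ∨
               (∃ z : V, A a z ∧ A z y ∧ z ≠ x ∧ S = line A x z)} : Set (Set V))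
             {S | (∃ z : V, A a z ∧ S = line A a z) ∨
               (∃ z : V, A z a ∧ S = line A z a)} ∧
    Disjoint ({S | (∃ z : V, A a z ∧ A y z ∧ S = line A y z) ∨
               (∃ z : V, A z a ∧ A x z ∧ z ≠ y ∧ S = line A z y)} : Set (Set V))
             {S | (∃ z : V, A a z ∧ S = line A a z) ∨
               (∃ z : V, A z a ∧ S = line A z a)} ∧
    line A x y ∉ ({S | (∃ z : V, A z a ∧ A z x ∧ S = line A z x) ∨
               (∃ z : V, A a z ∧ A z y ∧ z ≠ x ∧ S = line A x z)} : Set (Set V)) ∪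
             {S | (∃ z : V, A a z ∧ A y z ∧ S = line A y z) ∨
               (∃ z : V, A z a ∧ A x z ∧ z ≠ y ∧ S = line A z y)} := by
  have irr : ∀ u : V, ¬ A u u := fun u h => hanti u u ⟨h, h⟩
  have hnxa : ¬ A x a := fun h => hanti a x ⟨hx, h⟩
  have hnay : ¬ A a y := fun h => hanti a y ⟨h, hy⟩
  have hdax : ddist A a x = 1 := ddist_arc hanti hx
  have hdya : ddist A y a = 1 := ddist_arc hanti hy
  have hne_xy : x ≠ y := by rintro rfl; exact hanti a x ⟨hx, hy⟩
  have hne_ax : a ≠ x := by rintro rfl; exact irr a hx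
  have hne_ay : a ≠ y := by rintro rfl; exact irr a hy
  -- Key claim: A x y
  have hxy : A x y := by
    by_contra hnxy
    have hyx : A y x := (hcomp x y hne_xy).resolve_left hnxy
    have h2 : 2 ≤ ddist A x y := two_le_ddist hsc hne_xy hnxy
    have hdyx : ddist A y x = 1 := ddist_arc hanti hyx
    have hx_mem : x ∈ line A y a := by rw [← hrep]; exact mem_line_right A a x
    have hxa2 : ddist A x a = ddist A x y + 1 := by
      rcases (mem_line_iff hanti hsc hy x).mp hx_mem with h | h
      · exact h
      · rw [hdyx, hdax] at h; omega
    have hy_mem : y ∈ line A a x := by rw [hrep]; exact mem_line_left A y a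
    have hay2 : ddist A a y = ddist A x y + 1 := by
      rcases (mem_line_iff hanti hsc hx y).mp hy_mem with h | h
      · rw [hdyx, hdya] at h; omega
      · exact h
    obtain ⟨w, hxw, hwy⟩ := ddist_succ hsc (show ddist A x y = (ddist A x y - 1) + 1 by omega)
    have hdxw : ddist A x w = 1 := ddist_arc hanti hxw
    have ht1 := ddist_triangle hsc w y a
    have ht2 := ddist_triangle hsc x w a
    have hwa : ddist A w a = ddist A w y + 1 := by omega
    have hw_mem : w ∈ line A a x := by
      rw [hrep]; exact (mem_line_iff hanti hsc hy w).mpr (Or.inl hwa)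
    rcases (mem_line_iff hanti hsc hx w).mp hw_mem with h | h
    · have := ddist_triangle hsc w y x
      omega
    · -- h : ddist a w = ddist x w + 1 = 2
      have hwa2 : 2 ≤ ddist A w a := by omega
      have hwna : w ≠ a := by
        rintro rfl; rw [ddist_self] at hwa2; omega
      rcases hcomp w a hwna with h5 | h5
      · rw [ddist_arc hanti h5] at hwa2; omega
      · rw [ddist_arc hanti h5] at h; omega
  have hdxy : ddist A x y = 1 := ddist_arc hanti hxy
  have hnyx : ¬ A y x := fun h => hanti x y ⟨hxy, h⟩
  have hdyx : ddist A y x = 2 := by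
    have h1 := ddist_triangle hsc y a x
    have h2 := two_le_ddist hsc (Ne.symm hne_xy) hnyx
    omega
  have hdxa : ddist A x a = 2 := by
    have h1 := ddist_triangle hsc x y a
    have h2 := two_le_ddist hsc (Ne.symm hne_ax) hnxa
    omega
  have hday : ddist A a y = 2 := by
    have h1 := ddist_triangle hsc a x y
    have h2 := two_le_ddist hsc hne_ay hnay
    omega
  -- structure of z ∈ a⁺ ∩ y⁻ with z ≠ x
  have hX2 : ∀ z, A a z → A z y → z ≠ x → ddist A z x = 3 ∧ A x z ∧ ddist A z a = 2 := by
    intro z haz hzy hzx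
    have hne_za : z ≠ a := by rintro rfl; exact irr _ haz
    have hnza : ¬ A z a := fun h => hanti a z ⟨haz, h⟩
    have hdzy : ddist A z y = 1 := ddist_arc hanti hzy
    have hdza : ddist A z a = 2 := by
      have h1 := ddist_triangle hsc z y a
      have h2 := two_le_ddist hsc hne_za hnza
      omega
    have hz_mem : z ∈ line A a x := by
      rw [hrep]
      exact (mem_line_iff hanti hsc hy z).mpr (Or.inl (by omega))
    have hdaz : ddist A a z = 1 := ddist_arc hanti haz
    have hdzx : ddist A z x = 3 := by
      rcases (mem_line_iff hanti hsc hx z).mp hz_mem with h | h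
      · omega
      · exfalso
        have hxz0 : ddist A x z = 0 := by omega
        exact hzx (eq_of_ddist_zero hsc hxz0).symm
    have hnzx : ¬ A z x := fun h => by rw [ddist_arc hanti h] at hdzx; omega
    exact ⟨hdzx, (hcomp x z (fun h => hzx h.symm)).resolve_right hnzx, hdza⟩
  -- structure of z ∈ a⁻ ∩ x⁺ with z ≠ y
  have hY2 : ∀ z, A z a → A x z → z ≠ y → ddist A y z = 3 ∧ A z y ∧ ddist A a z = 2 := by
    intro z hza hxz hzy
    have hne_az : a ≠ z := by rintro rfl; exact irr _ hza
    have hnaz : ¬ A a z := fun h => hanti a z ⟨h, hza⟩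
    have hdxz : ddist A x z = 1 := ddist_arc hanti hxz
    have hdaz : ddist A a z = 2 := by
      have h1 := ddist_triangle hsc a x z
      have h2 := two_le_ddist hsc hne_az hnaz
      omega
    have hz_mem : z ∈ line A y a := by
      rw [← hrep]
      exact (mem_line_iff hanti hsc hx z).mpr (Or.inr (by omega))
    have hdza : ddist A z a = 1 := ddist_arc hanti hza
    have hdyz : ddist A y z = 3 := by
      rcases (mem_line_iff hanti hsc hy z).mp hz_mem with h | h
      · exfalso
        have h0 : ddist A z y = 0 := by omega
        exact hzy (eq_of_ddist_zero hsc h0)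
      · omega
    have hnyz : ¬ A y z := fun h => by rw [ddist_arc hanti h] at hdyz; omega
    exact ⟨hdyz, (hcomp z y hzy).resolve_right hnyz, hdaz⟩
  -- a is in no X line
  have hA1 : ∀ z, A z a → A z x → a ∉ line A z x := by
    intro z hza hzx hmem
    have hdza : ddist A z a = 1 := ddist_arc hanti hza
    rcases (mem_line_iff hanti hsc hzx a).mp hmem with h | h
    · have h0 : ddist A a z = 0 := by omega
      have he := eq_of_ddist_zero hsc h0
      rw [← he] at hza
      exact irr a hza
    · omega
  have hA2 : ∀ z, A a z → A z y → z ≠ x → a ∉ line A x z := by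
    intro z haz hzy hzx hmem
    obtain ⟨hdzx, hxz, hdza⟩ := hX2 z haz hzy hzx
    have hdaz : ddist A a z = 1 := ddist_arc hanti haz
    rcases (mem_line_iff hanti hsc hxz a).mp hmem with h | h
    · omega
    · omega
  -- a is in no Y line
  have hA3 : ∀ z, A a z → A y z → a ∉ line A y z := by
    intro z haz hyz hmem
    have hdaz : ddist A a z = 1 := ddist_arc hanti haz
    rcases (mem_line_iff hanti hsc hyz a).mp hmem with h | h
    · omega
    · have h0 : ddist A z a = 0 := by omega
      have he := eq_of_ddist_zero hsc h0
      rw [he] at haz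
      exact irr a haz
  have hA4 : ∀ z, A z a → A x z → z ≠ y → a ∉ line A z y := by
    intro z hza hxz hzy hmem
    obtain ⟨hdyz, hzy', hdaz⟩ := hY2 z hza hxz hzy
    have hdza : ddist A z a = 1 := ddist_arc hanti hza
    rcases (mem_line_iff hanti hsc hzy' a).mp hmem with h | h
    · omega
    · omega
  -- a ∈ line x y
  have haxy : a ∈ line A x y := by
    simp only [line, Set.mem_setOf_eq, _root_.btw]
    left
    omega
  -- key X-Y separation lemma for the (z x)/(y z') case
  have hK : ∀ z z', A z a → A z x → A a z' → A y z' →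
      ¬ (z' ∈ line A z x ∧ x ∈ line A y z') := by
    rintro z z' hza hzx haz' hyz' ⟨h1, h2⟩
    have hdza : ddist A z a = 1 := ddist_arc hanti hza
    have hdaz' : ddist A a z' = 1 := ddist_arc hanti haz'
    have hdzz' : ddist A z z' ≤ 2 := by
      have := ddist_triangle hsc z a z'
      omega
    have hne : z' ≠ z := by rintro rfl; exact hanti _ _ ⟨haz', hza⟩
    rcases (mem_line_iff hanti hsc hzx z').mp h1 with hα | hβ
    · rcases (mem_line_iff hanti hsc hyz' x).mp h2 with hε | hζ
      · -- hε : ddist x z' = ddist x y + 1 = 2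
        have hxz'2 : ddist A x z' = 2 := by omega
        have hnxz' : ¬ A x z' := fun h => by rw [ddist_arc hanti h] at hxz'2; omega
        have hnex : x ≠ z' := by rintro rfl; rw [ddist_self] at hxz'2; omega
        have hz'x : A z' x := (hcomp x z' hnex).resolve_left hnxz'
        have hd1 : ddist A z' x = 1 := ddist_arc hanti hz'x
        have h0 : ddist A z' z = 0 := by omega
        exact hne (eq_of_ddist_zero hsc h0)
      · -- hζ : ddist y x = ddist z' x + 1, so ddist z' x = 1
        have h0 : ddist A z' z = 0 := by omega
        exact hne (eq_of_ddist_zero hsc h0)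
    · rcases (mem_line_iff hanti hsc hyz' x).mp h2 with hε | hζ
      · omega
      · have hz'x : A z' x := arc_of_ddist_one hsc (by omega)
        have hnxz' : ¬ A x z' := fun h => hanti z' x ⟨hz'x, h⟩
        have hnex : x ≠ z' := by rintro rfl; exact irr _ hz'x
        have := two_le_ddist hsc hnex hnxz'
        omega
  -- y is in no X2 line
  have hYnot : ∀ z, A a z → A z y → z ≠ x → y ∉ line A x z := by
    intro z haz hzy hzx hmem
    obtain ⟨hdzx, hxz, hdza⟩ := hX2 z haz hzy hzx
    have hdzy : ddist A z y = 1 := ddist_arc hanti hzy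
    have hdaz : ddist A a z = 1 := ddist_arc hanti haz
    rcases (mem_line_iff hanti hsc hxz y).mp hmem with h | h
    · have := ddist_triangle hsc y a z
      omega
    · omega
  -- x is in no Y2 line
  have hXnot : ∀ z, A z a → A x z → z ≠ y → x ∉ line A z y := by
    intro z hza hxz hzy hmem
    obtain ⟨hdyz, hzy', hdaz⟩ := hY2 z hza hxz hzy
    have hdxz : ddist A x z = 1 := ddist_arc hanti hxz
    have hdza : ddist A z a = 1 := ddist_arc hanti hza
    rcases (mem_line_iff hanti hsc hzy' x).mp hmem with h | h
    · omega
    · have := ddist_triangle hsc z a x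
      omega
  refine ⟨?_, ?_, ?_, ?_⟩
  · rw [Set.disjoint_left]
    rintro S (⟨z, hza, hzx, rfl⟩ | ⟨z, haz, hzy, hzne, rfl⟩) hS2
    · rcases hS2 with ⟨z', haz', hyz', hEq⟩ | ⟨z', hz'a, hxz', hz'ne, hEq⟩
      · exact hK z z' hza hzx haz' hyz'
          ⟨by rw [hEq]; exact mem_line_right A y z', by rw [← hEq]; exact mem_line_right A z x⟩
      · exact hXnot z' hz'a hxz' hz'ne (by rw [← hEq]; exact mem_line_right A z x)
    · rcases hS2 with ⟨z', haz', hyz', hEq⟩ | ⟨z', hz'a, hxz', hz'ne, hEq⟩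
      · exact hYnot z haz hzy hzne (by rw [hEq]; exact mem_line_left A y z')
      · exact hYnot z haz hzy hzne (by rw [hEq]; exact mem_line_right A z' y)
  · rw [Set.disjoint_left]
    rintro S (⟨z, hza, hzx, rfl⟩ | ⟨z, haz, hzy, hzne, rfl⟩) hS2
    · rcases hS2 with ⟨w, haw, hEq⟩ | ⟨w, hwa, hEq⟩
      · exact hA1 z hza hzx (by rw [hEq]; exact mem_line_left A a w)
      · exact hA1 z hza hzx (by rw [hEq]; exact mem_line_right A w a)
    · rcases hS2 with ⟨w, haw, hEq⟩ | ⟨w, hwa, hEq⟩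
      · exact hA2 z haz hzy hzne (by rw [hEq]; exact mem_line_left A a w)
      · exact hA2 z haz hzy hzne (by rw [hEq]; exact mem_line_right A w a)
  · rw [Set.disjoint_left]
    rintro S (⟨z, haz, hyz, rfl⟩ | ⟨z, hza, hxz, hzne, rfl⟩) hS2
    · rcases hS2 with ⟨w, haw, hEq⟩ | ⟨w, hwa, hEq⟩
      · exact hA3 z haz hyz (by rw [hEq]; exact mem_line_left A a w)
      · exact hA3 z haz hyz (by rw [hEq]; exact mem_line_right A w a)
    · rcases hS2 with ⟨w, haw, hEq⟩ | ⟨w, hwa, hEq⟩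
      · exact hA4 z hza hxz hzne (by rw [hEq]; exact mem_line_left A a w)
      · exact hA4 z hza hxz hzne (by rw [hEq]; exact mem_line_right A w a)
  · intro hmem
    simp only [Set.mem_union, Set.mem_setOf_eq] at hmem
    rcases hmem with (⟨z, hza, hzx, hEq⟩ | ⟨z, haz, hzy, hzne, hEq⟩) |
      (⟨z, haz, hyz, hEq⟩ | ⟨z, hza, hxz, hzne, hEq⟩)
    · exact hA1 z hza hzx (by rw [← hEq]; exact haxy)
    · exact hA2 z haz hzy hzne (by rw [← hEq]; exact haxy)
    · exact hA3 z haz hyz (by rw [← hEq]; exact haxy)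
    · exact hA4 z hza hxz hzne (by rw [← hEq]; exact haxy)
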